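/- arXiv:2601.01160 — 2 statements merged into one kernel-verified Lean document; each statement's English description precedes it below -/
import Mathlib

section
/- Let d ≥ 1, L > 0, t > 0, and let f : ℝ^d → ℝ be convex and L-smooth, i.e. f is differentiable and ‖∇f(x) − ∇f(y)‖ ≤ L‖x − y‖ for all x, y ∈ ℝ^d. Then the smoothed function f_t is differentiable and for every x ∈ ℝ^d one has ‖∇f_t(x)‖² ≥ (1/2)‖∇f(x)‖² − L²·t². -/
open MeasureTheory

/-- The smoothed function `f_t(x) = 𝔼_r [f (x + t r)]`, where `r` is uniform on the closed
unit ball of `ℝ^d`. -/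
noncomputable def smoothedFn {d : ℕ} (t : ℝ) (f : EuclideanSpace ℝ (Fin d) → ℝ)
    (x : EuclideanSpace ℝ (Fin d)) : ℝ :=
  ⨍ r in Metric.closedBall (0 : EuclideanSpace ℝ (Fin d)) 1, f (x + t • r)

/-!
Differentiating under the integral sign, `∇f_t(x)` is the average of `∇f` over the ball of
radius `t` around `x`. Since `∇f` is `L`-Lipschitz, that average lies in the closed convex
ball of radius `L t` around `∇f(x)`; hence `‖∇f(x)‖ ≤ ‖∇f_t(x)‖ + L t`, and squaring with
`(a + b)² ≤ 2a² + 2b²` gives the bound.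
-/

open Metric InnerProductSpace
open scoped NNReal

section Smoothing

variable {E F : Type*} [NormedAddCommGroup E] [NormedSpace ℝ E]
  [MeasurableSpace E] [OpensMeasurableSpace E] [NormedAddCommGroup F] [NormedSpace ℝ F]
  {μ : Measure E} [IsFiniteMeasureOnCompacts μ] {s : Set E}

theorem norm_setAverage_comp_add_smul_sub_le [CompleteSpace F] {g : E → F} {K : ℝ≥0}
    (hg : LipschitzWith K g) (hs : IsCompact s) (hμs : μ s ≠ 0) (hs_ball : s ⊆ closedBall 0 1)
    (x : E) (t : ℝ) :
    ‖⨍ r in s, g (x + t • r) ∂μ - g x‖ ≤ K * |t| := by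
  rw [← dist_eq_norm, ← mem_closedBall]
  have hcont : Continuous fun r ↦ g (x + t • r) := hg.continuous.comp (by fun_prop)
  refine (convex_closedBall _ _).set_average_mem isClosed_closedBall hμs hs.measure_lt_top.ne ?_
    (hcont.continuousOn.integrableOn_compact hs)
  filter_upwards [ae_restrict_mem hs.measurableSet] with r hr
  calc dist (g (x + t • r)) (g x) ≤ K * dist (x + t • r) x := hg.dist_le_mul _ _
    _ = K * (|t| * ‖r‖) := by
      rw [dist_eq_norm, add_sub_cancel_left, norm_smul, Real.norm_eq_abs]
    _ ≤ K * |t| := by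
      gcongr
      exact mul_le_of_le_one_right (abs_nonneg t) (by simpa using hs_ball hr)

variable [ProperSpace E]

theorem hasFDerivAt_setIntegral_comp_add_smul {f : E → F}
    (hf : ContDiff ℝ 1 f) (hs : IsCompact s) (t : ℝ) (x₀ : E) :
    HasFDerivAt (fun x ↦ ∫ r in s, f (x + t • r) ∂μ)
      (∫ r in s, fderiv ℝ f (x₀ + t • r) ∂μ) x₀ := by
  have hf' : Continuous (fderiv ℝ f) := hf.continuous_fderiv one_ne_zero
  have hshift : Continuous fun p : E × E ↦ p.1 + t • p.2 := by fun_prop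
  -- For `x` near `x₀` the points `x + t • r` stay in the compact set `closedBall x₀ 1 + t • s`.
  obtain ⟨C, hC⟩ := ((isCompact_closedBall x₀ 1).add (hs.smul t)).exists_bound_of_continuousOn
    hf'.continuousOn
  refine hasFDerivAt_integral_of_dominated_of_fderiv_le (bound := fun _ ↦ C)
    (F' := fun x r ↦ fderiv ℝ f (x + t • r)) (closedBall_mem_nhds x₀ one_pos)
    (.of_forall fun x ↦
      (hf.continuous.comp (hshift.comp (.prodMk_right x))).aestronglyMeasurable)
    ((hf.continuous.comp (hshift.comp (.prodMk_right x₀))).continuousOn.integrableOn_compact hs)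
    (hf'.comp (hshift.comp (.prodMk_right x₀))).aestronglyMeasurable ?_
    (integrableOn_const hs.measure_lt_top.ne) ?_
  · filter_upwards [ae_restrict_mem hs.measurableSet] with r hr x hx
    exact hC _ (Set.add_mem_add hx (Set.smul_mem_smul_set hr))
  · refine .of_forall fun r x _ ↦ ?_
    exact (hf.differentiable one_ne_zero _).hasFDerivAt.comp x
      ((hasFDerivAt_id x).add_const (t • r))

theorem hasFDerivAt_setAverage_comp_add_smul {f : E → F}
    (hf : ContDiff ℝ 1 f) (hs : IsCompact s) (t : ℝ) (x₀ : E) :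
    HasFDerivAt (fun x ↦ ⨍ r in s, f (x + t • r) ∂μ)
      (⨍ r in s, fderiv ℝ f (x₀ + t • r) ∂μ) x₀ := by
  simp only [setAverage_eq]
  exact (hasFDerivAt_setIntegral_comp_add_smul hf hs t x₀).const_smul _

end Smoothing

theorem hasGradientAt_smoothedFn {d : ℕ} {t : ℝ} {f : EuclideanSpace ℝ (Fin d) → ℝ}
    (hf : ContDiff ℝ 1 f) (x : EuclideanSpace ℝ (Fin d)) :
    HasGradientAt (smoothedFn t f)
      (⨍ r in closedBall (0 : EuclideanSpace ℝ (Fin d)) 1, gradient f (x + t • r)) x := by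
  rw [hasGradientAt_iff_hasFDerivAt]
  have h := hasFDerivAt_setAverage_comp_add_smul (μ := volume) hf (isCompact_closedBall 0 1) t x
  simp only [average, ← toDual_comp_gradient (f := f), Function.comp_apply,
    ← LinearIsometryEquiv.coe_toLinearIsometry, LinearIsometry.integral_comp_comm] at h
  exact h

theorem smoothed_grad_norm_lower_bound_general {d : ℕ} (L t : ℝ) (hL : 0 < L)
    (f : EuclideanSpace ℝ (Fin d) → ℝ)
    (hdiff : Differentiable ℝ f)
    (hsmooth : ∀ x y : EuclideanSpace ℝ (Fin d),
      ‖gradient f x - gradient f y‖ ≤ L * ‖x - y‖) :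
    Differentiable ℝ (smoothedFn t f) ∧
      ∀ x : EuclideanSpace ℝ (Fin d),
        1 / 2 * ‖gradient f x‖ ^ 2 - L ^ 2 * t ^ 2 ≤ ‖gradient (smoothedFn t f) x‖ ^ 2 := by
  have hlip : LipschitzWith ⟨L, hL.le⟩ (gradient f) :=
    .of_dist_le_mul fun x y ↦ by rw [dist_eq_norm, dist_eq_norm]; exact hsmooth x y
  have hf : ContDiff ℝ 1 f := contDiff_one_iff_fderiv.2
    ⟨hdiff, toDual_comp_gradient (f := f) ▸ (toDual ℝ _).continuous.comp hlip.continuous⟩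
  refine ⟨fun x ↦ (hasGradientAt_smoothedFn hf x).differentiableAt, fun x ↦ ?_⟩
  have hclose : ‖gradient (smoothedFn t f) x - gradient f x‖ ≤ L * |t| := by
    rw [(hasGradientAt_smoothedFn hf x).gradient]
    exact norm_setAverage_comp_add_smul_sub_le hlip (isCompact_closedBall 0 1)
      (measure_closedBall_pos _ _ one_pos).ne' subset_rfl x t
  have hnear : ‖gradient f x‖ ≤ ‖gradient (smoothedFn t f) x‖ + L * |t| :=
    (norm_le_norm_add_norm_sub' _ (gradient (smoothedFn t f) x)).trans
      (by rw [norm_sub_rev]; gcongr)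
  nlinarith [sq_abs t, sq_nonneg (‖gradient (smoothedFn t f) x‖ - L * |t|),
    norm_nonneg (gradient f x)]

theorem smoothed_grad_norm_lower_bound {d : ℕ} (hd : 1 ≤ d) (L t : ℝ) (hL : 0 < L) (ht : 0 < t)
    (f : EuclideanSpace ℝ (Fin d) → ℝ)
    (hconv : ConvexOn ℝ Set.univ f)
    (hdiff : Differentiable ℝ f)
    (hsmooth : ∀ x y : EuclideanSpace ℝ (Fin d),
      ‖gradient f x - gradient f y‖ ≤ L * ‖x - y‖) :
    Differentiable ℝ (smoothedFn t f) ∧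
      ∀ x : EuclideanSpace ℝ (Fin d),
        1 / 2 * ‖gradient f x‖ ^ 2 - L ^ 2 * t ^ 2 ≤ ‖gradient (smoothedFn t f) x‖ ^ 2 :=
  smoothed_grad_norm_lower_bound_general L t hL f hdiff hsmooth
end

section
/- Let d ≥ 1, L > 0, μ > 0, and let f : ℝ^d → ℝ be L-smooth (differentiable with ‖∇f(x) − ∇f(y)‖ ≤ L‖x − y‖ for all x, y) and μ-strongly convex ((μ/2)‖x − y‖² ≤ f(x) − f(y) − ⟨∇f(y), x − y⟩ for all x, y). Let (Ω, F, P) be a probability space, let ĝ : Ω → ℝ^d be a square-integrable random vector, let γ > 0, let x_g ∈ ℝ^d, and set x⁺ := x_g − γ·ĝ (a random point). Then for every u ∈ ℝ^d: E[f(x⁺)] ≤ f(u) − ⟨∇f(x_g), u − x_g⟩ − (μ/2)‖u − x_g‖² − (γ/2)‖∇f(x_g)‖² + (γ/2)‖E[ĝ] − ∇f(x_g)‖² + (L·γ²/2)·E[‖ĝ‖²]. -/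
open MeasureTheory RealInnerProductSpace Set

/-!
An `L`-Lipschitz gradient gives the two-sided bound
`|f z - f x - ⟪∇f x, z - x⟫| ≤ L / 2 * ‖z - x‖ ^ 2`. Taking `z = x - γ • ĝ` and integrating the
upper half gives `E f(x⁺) ≤ f x - γ ⟪∇f x, E ĝ⟫ + L γ² / 2 * E ‖ĝ‖²`, while the lower half makes
`f(x⁺)` integrable. Strong convexity at `u` then bounds `f x`, and the polarization
`-⟪a, b⟫ ≤ (‖b - a‖² - ‖a‖²) / 2` absorbs the inner product.
-/

theorem sub_sub_le_of_hasDerivAt {φ φ' : ℝ → ℝ} {K : ℝ} (hφ : ∀ t, HasDerivAt φ (φ' t) t)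
    (hK : ∀ t, 0 < t → φ' t - φ' 0 ≤ K * t) : φ 1 - φ 0 - φ' 0 ≤ K / 2 := by
  set ψ : ℝ → ℝ := fun t ↦ φ t - t * φ' 0 - K / 2 * t ^ 2
  have hψ : ∀ t, HasDerivAt ψ (φ' t - φ' 0 - K * t) t := fun t ↦
    (((hφ t).sub ((hasDerivAt_id' t).mul_const (φ' 0))).sub
      ((hasDerivAt_pow 2 t).const_mul (K / 2))).congr_deriv (by ring)
  have hanti : AntitoneOn ψ (Ici 0) := by
    refine antitoneOn_of_hasDerivWithinAt_nonpos (convex_Ici 0)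
      (fun t _ ↦ (hψ t).continuousAt.continuousWithinAt)
      (fun t _ ↦ (hψ t).hasDerivWithinAt) fun t ht ↦ ?_
    rw [interior_Ici] at ht
    linarith [hK t ht]
  have := hanti (mem_Ici.2 le_rfl) (mem_Ici.2 zero_le_one) zero_le_one
  simp only [ψ] at this
  linarith

theorem abs_sub_sub_le_of_hasDerivAt {φ φ' : ℝ → ℝ} {K : ℝ} (hφ : ∀ t, HasDerivAt φ (φ' t) t)
    (hK : ∀ t, 0 < t → |φ' t - φ' 0| ≤ K * t) : |φ 1 - φ 0 - φ' 0| ≤ K / 2 := by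
  have hupper := sub_sub_le_of_hasDerivAt hφ fun t ht ↦ (le_abs_self _).trans (hK t ht)
  have hlower := sub_sub_le_of_hasDerivAt (φ := -φ) (φ' := -φ') (fun t ↦ (hφ t).neg)
    fun t ht ↦ by simpa only [Pi.neg_apply, neg_sub_neg, neg_sub] using
      (neg_le_abs _).trans (hK t ht)
  simp only [Pi.neg_apply] at hlower
  exact abs_le.2 ⟨by linarith, hupper⟩

section InnerProductSpace

variable {E : Type*} [NormedAddCommGroup E] [InnerProductSpace ℝ E]

theorem abs_sub_sub_inner_gradient_le [CompleteSpace E] {f : E → ℝ} {L : ℝ}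
    (hf : Differentiable ℝ f)
    (hL : ∀ x y, ‖gradient f x - gradient f y‖ ≤ L * ‖x - y‖) (x y : E) :
    |f x - f y - ⟪gradient f y, x - y⟫| ≤ L / 2 * ‖x - y‖ ^ 2 := by
  set v := x - y
  have hφ : ∀ t : ℝ, HasDerivAt (fun s : ℝ ↦ f (y + s • v)) ⟪gradient f (y + t • v), v⟫ t :=
    fun t ↦ (hf _).hasGradientAt.hasFDerivAt.comp_hasDerivAt t
      (((hasDerivAt_id t).smul_const v).const_add y |>.congr_deriv (one_smul ℝ v))
  have hK : ∀ t : ℝ, 0 < t →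
      |⟪gradient f (y + t • v), v⟫ - ⟪gradient f (y + (0 : ℝ) • v), v⟫| ≤ L * ‖v‖ ^ 2 * t :=
    fun t ht ↦ calc
      _ = |⟪gradient f (y + t • v) - gradient f y, v⟫| := by
        rw [zero_smul, add_zero, inner_sub_left]
      _ ≤ ‖gradient f (y + t • v) - gradient f y‖ * ‖v‖ := abs_real_inner_le_norm _ _
      _ ≤ L * ‖y + t • v - y‖ * ‖v‖ := by gcongr; exact hL _ _
      _ = L * ‖v‖ ^ 2 * t := by
        rw [add_sub_cancel_left, norm_smul, Real.norm_of_nonneg ht.le]; ring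
  have := abs_sub_sub_le_of_hasDerivAt hφ hK
  simp only [zero_smul, add_zero, one_smul, v, add_sub_cancel] at this
  linarith

variable {Ω : Type*} [MeasurableSpace Ω] {P : Measure Ω} {f : E → ℝ} {x a : E} {C : ℝ}
  {h : Ω → E}

theorem integrable_comp_add_of_abs_sub_sub_inner_le [IsFiniteMeasure P] (hf : Continuous f)
    (hq : ∀ v, |f (x + v) - f x - ⟪a, v⟫| ≤ C * ‖v‖ ^ 2) (hh : MemLp h 2 P) :
    Integrable (fun ω ↦ f (x + h ω)) P := by
  have hdom : Integrable (fun ω ↦ |f x| + ‖a‖ * ‖h ω‖ + C * ‖h ω‖ ^ 2) P :=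
    ((integrable_const _).add ((hh.integrable one_le_two).norm.const_mul _)).add
      (hh.norm.integrable_sq.const_mul _)
  refine hdom.mono' (hf.comp_aestronglyMeasurable (hh.1.const_add x)) (ae_of_all _ fun ω ↦ ?_)
  obtain ⟨hq_lo, hq_hi⟩ := abs_le.1 (hq (h ω))
  obtain ⟨hin_lo, hin_hi⟩ := abs_le.1 (abs_real_inner_le_norm a (h ω))
  rw [Real.norm_eq_abs, abs_le]
  constructor <;> linarith [neg_abs_le (f x), le_abs_self (f x)]

theorem integral_comp_add_le [CompleteSpace E] [IsProbabilityMeasure P] (hf : Continuous f)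
    (hq : ∀ v, |f (x + v) - f x - ⟪a, v⟫| ≤ C * ‖v‖ ^ 2) (hh : MemLp h 2 P) :
    ∫ ω, f (x + h ω) ∂P ≤ f x + ⟪a, ∫ ω, h ω ∂P⟫ + C * ∫ ω, ‖h ω‖ ^ 2 ∂P := by
  have hinner : Integrable (fun ω ↦ ⟪a, h ω⟫) P := (hh.integrable one_le_two).const_inner a
  have hsq : Integrable (fun ω ↦ C * ‖h ω‖ ^ 2) P := hh.norm.integrable_sq.const_mul C
  calc ∫ ω, f (x + h ω) ∂P ≤ ∫ ω, (f x + ⟪a, h ω⟫ + C * ‖h ω‖ ^ 2) ∂P :=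
        integral_mono (integrable_comp_add_of_abs_sub_sub_inner_le hf hq hh)
          (((integrable_const _).add hinner).add hsq)
          fun ω ↦ by linarith [(abs_le.1 (hq (h ω))).2]
    _ = f x + ⟪a, ∫ ω, h ω ∂P⟫ + C * ∫ ω, ‖h ω‖ ^ 2 ∂P := by
        rw [integral_add (f := fun ω ↦ f x + ⟪a, h ω⟫) ((integrable_const _).add hinner) hsq,
          integral_add (integrable_const _) hinner, integral_const, integral_inner
            (hh.integrable one_le_two), integral_const_mul]
        simp

end InnerProductSpace

theorem one_step_descent_general {d : ℕ} (L μ : ℝ)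
    (f : EuclideanSpace ℝ (Fin d) → ℝ)
    (hdiff : Differentiable ℝ f)
    (hsmooth : ∀ x y : EuclideanSpace ℝ (Fin d),
      ‖gradient f x - gradient f y‖ ≤ L * ‖x - y‖)
    (hsc : ∀ x y : EuclideanSpace ℝ (Fin d),
      μ / 2 * ‖x - y‖ ^ 2 ≤ f x - f y - ⟪gradient f y, x - y⟫)
    {Ω : Type*} [MeasurableSpace Ω] (P : Measure Ω) [IsProbabilityMeasure P]
    (g : Ω → EuclideanSpace ℝ (Fin d)) (hg : MemLp g 2 P)
    (γ : ℝ) (hγ : 0 < γ) (xg : EuclideanSpace ℝ (Fin d))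
    (u : EuclideanSpace ℝ (Fin d)) :
    ∫ ω, f (xg - γ • g ω) ∂P ≤
      f u - ⟪gradient f xg, u - xg⟫ - μ / 2 * ‖u - xg‖ ^ 2 -
        γ / 2 * ‖gradient f xg‖ ^ 2 +
        γ / 2 * ‖(∫ ω, g ω ∂P) - gradient f xg‖ ^ 2 +
        L * γ ^ 2 / 2 * ∫ ω, ‖g ω‖ ^ 2 ∂P := by
  set a := gradient f xg
  set Eg := ∫ ω, g ω ∂P
  have hquad : ∀ v, |f (xg + v) - f xg - ⟪a, v⟫| ≤ L / 2 * ‖v‖ ^ 2 := fun v ↦ by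
    simpa only [add_sub_cancel_left] using
      abs_sub_sub_inner_gradient_le hdiff hsmooth (xg + v) xg
  have hstep : ∫ ω, f (xg - γ • g ω) ∂P ≤
      f xg - γ * ⟪a, Eg⟫ + L * γ ^ 2 / 2 * ∫ ω, ‖g ω‖ ^ 2 ∂P := by
    have := integral_comp_add_le hdiff.continuous hquad (hg.const_smul (-γ))
    simp only [Pi.smul_apply, neg_smul, ← sub_eq_add_neg, integral_neg, integral_smul,
      inner_neg_right, inner_smul_right, norm_neg, norm_smul, mul_pow, Real.norm_eq_abs, sq_abs,
      integral_const_mul] at this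
    linarith
  have hconvex := hsc u xg
  have hpolar : -(γ * ⟪a, Eg⟫) ≤ -(γ / 2 * ‖a‖ ^ 2) + γ / 2 * ‖Eg - a‖ ^ 2 := by
    rw [norm_sub_sq_real, real_inner_comm]
    nlinarith [mul_nonneg hγ.le (sq_nonneg ‖Eg‖)]
  linarith

theorem one_step_descent {d : ℕ} (hd : 1 ≤ d) (L μ : ℝ) (hL : 0 < L) (hμ : 0 < μ)
    (f : EuclideanSpace ℝ (Fin d) → ℝ)
    (hdiff : Differentiable ℝ f)
    (hsmooth : ∀ x y : EuclideanSpace ℝ (Fin d),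
      ‖gradient f x - gradient f y‖ ≤ L * ‖x - y‖)
    (hsc : ∀ x y : EuclideanSpace ℝ (Fin d),
      μ / 2 * ‖x - y‖ ^ 2 ≤ f x - f y - ⟪gradient f y, x - y⟫)
    {Ω : Type*} [MeasurableSpace Ω] (P : Measure Ω) [IsProbabilityMeasure P]
    (g : Ω → EuclideanSpace ℝ (Fin d)) (hg : MemLp g 2 P)
    (γ : ℝ) (hγ : 0 < γ) (xg : EuclideanSpace ℝ (Fin d))
    (u : EuclideanSpace ℝ (Fin d)) :
    ∫ ω, f (xg - γ • g ω) ∂P ≤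
      f u - ⟪gradient f xg, u - xg⟫ - μ / 2 * ‖u - xg‖ ^ 2 -
        γ / 2 * ‖gradient f xg‖ ^ 2 +
        γ / 2 * ‖(∫ ω, g ω ∂P) - gradient f xg‖ ^ 2 +
        L * γ ^ 2 / 2 * ∫ ω, ‖g ω‖ ^ 2 ∂P :=
  one_step_descent_general L μ f hdiff hsmooth hsc P g hg γ hγ xg u
end
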